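/- arXiv:1309.3112 — 3 statements merged into one kernel-verified Lean document; each statement's English description precedes it below -/
import Mathlib

section
/- The set {y ∈ ℝ : [[1,y],[y,2]] ⪰ 0 and [[2y,2],[2,y]] ⪰ 0} equals the singleton {√2}. -/
/-! A symmetric `2 × 2` matrix is positive semidefinite iff its diagonal is nonnegative and its
determinant is nonnegative. The first matrix thus forces `y ^ 2 ≤ 2`, the second `0 ≤ y` and
`2 ≤ y ^ 2`, leaving only `y = √2`. -/

namespace Matrix

theorem dotProduct_mulVec_fin_two_symm {R : Type*} [CommRing R] [StarRing R] [TrivialStar R]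
    (a b c : R) (x : Fin 2 → R) :
    star x ⬝ᵥ (!![a, b; b, c] *ᵥ x) = a * x 0 ^ 2 + 2 * b * x 0 * x 1 + c * x 1 ^ 2 := by
  simp only [star_trivial, dotProduct, mulVec, Fin.sum_univ_two, of_apply, cons_val', cons_val_zero,
    cons_val_one, empty_val', cons_val_fin_one]
  ring

theorem posSemidef_fin_two_symm_iff {K : Type*} [Field K] [LinearOrder K] [IsStrictOrderedRing K]
    [StarRing K] [TrivialStar K] {a b c : K} :
    (!![a, b; b, c] : Matrix (Fin 2) (Fin 2) K).PosSemidef ↔ 0 ≤ a ∧ 0 ≤ c ∧ b ^ 2 ≤ a * c := by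
  simp only [posSemidef_iff_dotProduct_mulVec, dotProduct_mulVec_fin_two_symm]
  constructor
  · rintro ⟨-, hform⟩
    have ha : 0 ≤ a := by simpa using hform ![1, 0]
    have hc : 0 ≤ c := by simpa using hform ![0, 1]
    have hquad : ∀ t : K, 0 ≤ a * (t * t) + 2 * b * t + c := fun t => by
      simpa [sq, mul_comm] using hform ![t, 1]
    have hdisc := discrim_le_zero hquad
    refine ⟨ha, hc, ?_⟩
    rw [discrim] at hdisc
    nlinarith
  · rintro ⟨ha, hc, hdet⟩
    refine ⟨?_, fun x => ?_⟩
    · ext i j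
      fin_cases i <;> fin_cases j <;> simp
    rcases ha.eq_or_lt with rfl | ha
    · obtain rfl : b = 0 := by nlinarith
      simp only [zero_mul, mul_zero, zero_add]
      positivity
    have hsq : a * (a * x 0 ^ 2 + 2 * b * x 0 * x 1 + c * x 1 ^ 2)
        = (a * x 0 + b * x 1) ^ 2 + (a * c - b ^ 2) * x 1 ^ 2 := by ring
    have : 0 ≤ a * (a * x 0 ^ 2 + 2 * b * x 0 * x 1 + c * x 1 ^ 2) := by
      rw [hsq]
      have hdet' := sub_nonneg.mpr hdet
      positivity
    exact nonneg_of_mul_nonneg_right this ha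

end Matrix

/-- The spectrahedron `{y : [[1,y],[y,2]] ⪰ 0, [[2y,2],[2,y]] ⪰ 0}` is the singleton `{√2}`. -/
theorem irrational_spectrahedron :
    {y : ℝ | (!![1, y; y, 2] : Matrix (Fin 2) (Fin 2) ℝ).PosSemidef ∧
      (!![2 * y, 2; 2, y] : Matrix (Fin 2) (Fin 2) ℝ).PosSemidef} = {Real.sqrt 2} := by
  ext y
  simp only [Set.mem_ofPred_eq, Set.mem_singleton_iff,
    Matrix.posSemidef_fin_two_symm_iff]
  constructor
  · rintro ⟨⟨-, -, hle⟩, -, hy, hge⟩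
    have hy2 : y ^ 2 = 2 := by linarith
    rw [← hy2, Real.sqrt_sq hy]
  · rintro rfl
    have hsq : Real.sqrt 2 ^ 2 = 2 := Real.sq_sqrt zero_le_two
    exact ⟨⟨zero_le_one, zero_le_two, by linarith⟩, by positivity, by positivity, by linarith⟩
end

section
/- Any point y ∈ ℝᵐ in the spectrahedron defined by [[1,2],[2,y₁]] ⪰ 0, and [[1,yₖ₋₁],[yₖ₋₁,yₖ]] ⪰ 0 for k = 2,…,m, satisfies yₘ ≥ 2^(2^m). -/
/-! Each constraint says `yₖ₋₁² ≤ yₖ` (nonnegativity of the 2×2 determinant), and the first one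
gives `y₁ ≥ 4 = 2^(2^1)`; squaring is monotone on nonnegative reals, so `2^(2^k) ≤ yₖ` propagates. -/

lemma sq_le_mul_of_posSemidef_fin_two {a b c : ℝ}
    (h : (!![a, b; b, c] : Matrix (Fin 2) (Fin 2) ℝ).PosSemidef) : b ^ 2 ≤ a * c := by
  have hdet := h.det_nonneg
  rw [Matrix.det_fin_two_of] at hdet
  nlinarith

lemma two_pow_two_pow_le_of_sq_le {m : ℕ} {y : ℕ → ℝ} (h1 : 4 ≤ y 1)
    (hsq : ∀ k, 2 ≤ k → k ≤ m → y (k - 1) ^ 2 ≤ y k) :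
    ∀ k, 1 ≤ k → k ≤ m → (2 : ℝ) ^ 2 ^ k ≤ y k := by
  intro k hk
  induction k, hk using Nat.le_induction with
  | base => intro; norm_num [h1]
  | succ n hn ih =>
    intro hnm
    calc (2 : ℝ) ^ 2 ^ (n + 1) = ((2 : ℝ) ^ 2 ^ n) ^ 2 := by rw [pow_succ, pow_mul]
      _ ≤ y n ^ 2 := pow_le_pow_left₀ (by positivity) (ih (by omega)) 2
      _ ≤ y (n + 1) := hsq (n + 1) (by omega) hnm

/-- Any point of the exponential spectrahedron satisfies `yₘ ≥ 2^(2^m)`. -/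
theorem exponential_spectrahedron (m : ℕ) (hm : 1 ≤ m) (y : ℕ → ℝ)
    (h1 : (!![1, 2; 2, y 1] : Matrix (Fin 2) (Fin 2) ℝ).PosSemidef)
    (hrec : ∀ k, 2 ≤ k → k ≤ m →
      (!![1, y (k - 1); y (k - 1), y k] : Matrix (Fin 2) (Fin 2) ℝ).PosSemidef) :
    (2 : ℝ) ^ (2 ^ m) ≤ y m := by
  have hy1 : 4 ≤ y 1 := by
    simpa [show (2 : ℝ) ^ 2 = 4 by norm_num] using sq_le_mul_of_posSemidef_fin_two h1
  have hsq : ∀ k, 2 ≤ k → k ≤ m → y (k - 1) ^ 2 ≤ y k := fun k hk hkm => by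
    simpa using sq_le_mul_of_posSemidef_fin_two (hrec k hk hkm)
  exact two_pow_two_pow_le_of_sq_le hy1 hsq m hm le_rfl
end

section
/- The closed 'TV-screen' set {x ∈ ℝ² : 1 − x₁⁴ − x₂⁴ ≥ 0} equals the projection onto the x-variables of the set of (x,u) ∈ ℝ²×ℝ² satisfying the three LMIs [[1−u₁,u₂],[u₂,1+u₁]] ⪰ 0, [[1,x₁],[x₁,u₁]] ⪰ 0, [[1,x₂],[x₂,u₂]] ⪰ 0. -/
/-!
By the 2×2 Schur criterion the corner LMIs say `xᵢ² ≤ uᵢ` and the first LMI says that `u` lies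
in the closed unit disk. The disk is downward closed in the nonnegative quadrant, so a lift `u`
exists iff `(x₀², x₁²)` itself lies in the disk, i.e. iff `x₀⁴ + x₁⁴ ≤ 1`.
-/

theorem Matrix.posSemidef_fin_two_iff {a b c : ℝ} :
    (!![a, b; b, c] : Matrix (Fin 2) (Fin 2) ℝ).PosSemidef ↔
      0 ≤ a ∧ 0 ≤ c ∧ b ^ 2 ≤ a * c := by
  constructor
  · intro h
    have hdet := h.det_nonneg
    rw [det_fin_two_of] at hdet
    exact ⟨h.diag_nonneg (i := 0), h.diag_nonneg (i := 1), by nlinarith⟩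
  · rintro ⟨ha, hc, hb⟩
    refine .of_dotProduct_mulVec_nonneg ?_ fun v ↦ ?_
    · ext i j
      fin_cases i <;> fin_cases j <;> rfl
    simp only [dotProduct, mulVec, Fin.sum_univ_two, of_apply, cons_val_zero, cons_val_one,
      star_trivial]
    rcases ha.eq_or_lt with rfl | ha
    · obtain rfl : b = 0 := by nlinarith
      nlinarith [mul_nonneg hc (sq_nonneg (v 1))]
    · have complete_square :
          a * (v 0 * (a * v 0 + b * v 1) + v 1 * (b * v 0 + c * v 1)) =
            (a * v 0 + b * v 1) ^ 2 + (a * c - b ^ 2) * v 1 ^ 2 := by ring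
      refine nonneg_of_mul_nonneg_right ?_ ha
      rw [complete_square]
      exact add_nonneg (sq_nonneg _) (mul_nonneg (sub_nonneg.2 hb) (sq_nonneg _))

theorem Matrix.posSemidef_one_corner_iff {t s : ℝ} :
    (!![1, t; t, s] : Matrix (Fin 2) (Fin 2) ℝ).PosSemidef ↔ t ^ 2 ≤ s := by
  rw [posSemidef_fin_two_iff, one_mul]
  exact ⟨fun h ↦ h.2.2, fun h ↦ ⟨zero_le_one, (sq_nonneg t).trans h, h⟩⟩

theorem Matrix.posSemidef_one_sub_one_add_iff {a b : ℝ} :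
    (!![1 - a, b; b, 1 + a] : Matrix (Fin 2) (Fin 2) ℝ).PosSemidef ↔ a ^ 2 + b ^ 2 ≤ 1 := by
  rw [posSemidef_fin_two_iff]
  constructor
  · rintro ⟨-, -, h⟩
    nlinarith
  · intro h
    have ha : |a| ≤ 1 := (sq_le_one_iff_abs_le_one a).1 (by nlinarith [sq_nonneg b])
    rw [abs_le] at ha
    exact ⟨by linarith, by linarith, by nlinarith⟩

/-- The TV screen `{x : 1 - x₁⁴ - x₂⁴ ≥ 0}` is the spectrahedral shadow obtained by
projecting (x,u) satisfying three 2×2 LMIs onto the x-variables. -/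
theorem tv_screen_spectrahedral_shadow :
    {x : Fin 2 → ℝ | 0 ≤ 1 - (x 0) ^ 4 - (x 1) ^ 4} =
    {x : Fin 2 → ℝ | ∃ u : Fin 2 → ℝ,
      (!![1 - u 0, u 1; u 1, 1 + u 0] : Matrix (Fin 2) (Fin 2) ℝ).PosSemidef ∧
      (!![1, x 0; x 0, u 0] : Matrix (Fin 2) (Fin 2) ℝ).PosSemidef ∧
      (!![1, x 1; x 1, u 1] : Matrix (Fin 2) (Fin 2) ℝ).PosSemidef} := by
  ext x
  simp only [Set.mem_ofPred_eq, Matrix.posSemidef_one_sub_one_add_iff,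
    Matrix.posSemidef_one_corner_iff]
  rw [show ∀ t : ℝ, t ^ 4 = (t ^ 2) ^ 2 from fun t ↦ by ring]
  constructor
  · intro hx
    refine ⟨![x 0 ^ 2, x 1 ^ 2], ?_, le_rfl, le_rfl⟩
    simp only [Matrix.cons_val_zero, Matrix.cons_val_one]
    linarith
  · rintro ⟨u, hu, hu₀, hu₁⟩
    have := pow_le_pow_left₀ (sq_nonneg _) hu₀ 2
    have := pow_le_pow_left₀ (sq_nonneg _) hu₁ 2
    linarith
end
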